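/- In the quadratic semi-stochastic setting with step size γ ≤ 1/(2L), the stationary second moment satisfies E_{π_γ}[⟨η, P(H)η⟩] = γ tr( C P(H) H^{-1} (2I − γH)^{-1} ) for any polynomial P, where π_γ is the stationary distribution of constant-step SGD. -/

import Mathlib

/-! Write `A = 1 - γH`. Since `η k` is built from `η 0, ξ 1, …, ξ k`, it is uncorrelated with the
fresh noise `ξ (k + 1)`, so the second-moment matrix `S k = E[η k η kᵀ]` obeys
`S (k + 1) = A S k A + γ² C`, i.e. `S k = Aᵏ S 0 Aᵏ + γ² ∑_{j<k} Aʲ C Aʲ`. The spectrum of `γH`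
lies in `(0, 1/2]`, so `Aᵏ → 0`; as `P(H)` commutes with `A`, `tr(P(H) S k)` tends to
`γ² tr(P(H) (1 - A²)⁻¹ C)`, and `1 - A² = γ (2I - γH) H`. -/

open MeasureTheory ProbabilityTheory Polynomial Matrix Filter Topology Finset

theorem eq_pow_mul_mul_pow_add_sum {R : Type*} [Semiring R] {x : ℕ → R} {a b c : R}
    (h : ∀ k, x (k + 1) = a * x k * b + c) (k : ℕ) :
    x k = a ^ k * x 0 * b ^ k + ∑ j ∈ range k, a ^ j * c * b ^ j := by
  induction k with
  | zero => simp
  | succ k ih =>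
    rw [h, ih, sum_range_succ']
    simp only [add_mul, mul_add, sum_mul, mul_sum, pow_succ', mul_assoc, pow_mul_comm', pow_zero,
      one_mul, mul_one, add_assoc]

theorem tendsto_geom_sum_of_mul_eq_one {R : Type*} [Ring R] [TopologicalSpace R]
    [IsTopologicalRing R] {x y : R} (hy : (1 - x) * y = 1)
    (hx : Tendsto (x ^ ·) atTop (𝓝 0)) :
    Tendsto (fun k => ∑ j ∈ range k, x ^ j) atTop (𝓝 y) := by
  have hsum : ∀ k, ∑ j ∈ range k, x ^ j = (1 - x ^ k) * y := fun k => by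
    rw [← geom_sum_mul_neg, mul_assoc, hy, mul_one]
  simpa [hsum] using ((tendsto_const_nhds (x := (1 : R))).sub hx).mul_const y

theorem Matrix.trace_mul_pow_mul_mul_pow {n R : Type*} [Fintype n] [DecidableEq n] [CommRing R]
    {A M : Matrix n n R} (hAM : Commute A M) (C : Matrix n n R) (j : ℕ) :
    trace (M * (A ^ j * C * A ^ j)) = trace (M * (A ^ 2) ^ j * C) := by
  rw [← pow_mul, mul_comm 2 j, pow_mul, sq, ← Matrix.mul_assoc, trace_mul_cycle,
    (hAM.pow_left j).eq]
  simp only [Matrix.mul_assoc]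

theorem Matrix.tendsto_trace_mul_pow_add_sum {n R : Type*} [Fintype n] [DecidableEq n]
    [CommRing R] [TopologicalSpace R] [IsTopologicalRing R] {A M y : Matrix n n R}
    (hAM : Commute A M) (hA : Tendsto (A ^ ·) atTop (𝓝 0)) (hy : (1 - A ^ 2) * y = 1)
    (S C : Matrix n n R) :
    Tendsto (fun k => trace (M * (A ^ k * S * A ^ k + ∑ j ∈ range k, A ^ j * C * A ^ j)))
      atTop (𝓝 (trace (M * y * C))) := by
  have hA2 : Tendsto ((A ^ 2) ^ ·) atTop (𝓝 0) := by
    have := hA.pow 2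
    rw [zero_pow two_ne_zero] at this
    exact this.congr fun k => by rw [← pow_mul, ← pow_mul, mul_comm]
  have hlim := (((tendsto_const_nhds (x := M)).mul hA2).mul_const S).add
    (((tendsto_const_nhds (x := M)).mul (tendsto_geom_sum_of_mul_eq_one hy hA2)).mul_const C)
  have htr := ((continuous_id.matrix_trace).tendsto _).comp hlim
  simp only [mul_zero, zero_mul, zero_add] at htr
  refine htr.congr fun k => ?_
  simp only [Function.comp_apply, id, Matrix.mul_add, trace_add, Matrix.mul_sum, Matrix.sum_mul,
    trace_sum, trace_mul_pow_mul_mul_pow hAM]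

namespace Matrix
variable {n : Type*} [Fintype n] [DecidableEq n] {H : Matrix n n ℝ} {γ : ℝ}

theorem IsHermitian.tendsto_cfc_pow_atTop_nhds_zero {𝕜 : Type*} [RCLike 𝕜] {A : Matrix n n 𝕜}
    (hA : A.IsHermitian) {f : ℝ → ℝ} (hf : ∀ x ∈ spectrum ℝ A, |f x| < 1) :
    Tendsto (fun k => cfc (fun x => f x ^ k) A) atTop (𝓝 0) := by
  have hdiag : Tendsto (fun k => diagonal (RCLike.ofReal ∘ (fun x => f x ^ k) ∘ hA.eigenvalues))
      atTop (𝓝 (diagonal 0 : Matrix n n 𝕜)) := by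
    refine continuous_id.matrix_diagonal.continuousAt.tendsto.comp
      (tendsto_pi_nhds.mpr fun i => ?_)
    have := tendsto_pow_atTop_nhds_zero_of_abs_lt_one
      (hf _ (hA.eigenvalues_mem_spectrum_real i))
    simpa [Function.comp_def] using ((RCLike.continuous_ofReal (K := 𝕜)).tendsto 0).comp this
  simp_rw [hA.cfc_eq, IsHermitian.cfc, Unitary.conjStarAlgAut_apply]
  simpa using (hdiag.const_mul _).mul_const _

theorem IsHermitian.cfc_const_sub_mul (hH : H.IsHermitian) (a b : ℝ) :
    cfc (fun x => a - b * x) H = a • 1 - b • H := by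
  rw [cfc_sub .., cfc_const_mul .., cfc_id' .., cfc_const .., Algebra.algebraMap_eq_smul_one]

theorem IsHermitian.le_of_mem_spectrum (hH : H.IsHermitian) {c : ℝ}
    (h : ∀ v : n → ℝ, v ⬝ᵥ H *ᵥ v ≤ c * (v ⬝ᵥ v)) {x : ℝ} (hx : x ∈ spectrum ℝ H) : x ≤ c := by
  rw [hH.spectrum_real_eq_range_eigenvalues] at hx
  obtain ⟨i, rfl⟩ := hx
  set v : n → ℝ := ⇑(hH.eigenvectorBasis i)
  have hv : 0 < v ⬝ᵥ v := by
    have hne : v ≠ 0 := fun h0 =>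
      (hH.eigenvectorBasis).orthonormal.ne_zero i (by ext j; exact congrFun h0 j)
    simpa using dotProduct_star_self_pos_iff.mpr hne
  have := h v
  rw [hH.mulVec_eigenvectorBasis, dotProduct_smul, smul_eq_mul] at this
  exact le_of_mul_le_mul_right this hv

theorem PosDef.mul_mem_Ioc_of_mem_spectrum (hH : H.PosDef) (hγ0 : 0 < γ)
    (hγ : ∀ v : n → ℝ, γ * (v ⬝ᵥ H *ᵥ v) ≤ 1 / 2 * (v ⬝ᵥ v)) {x : ℝ}
    (hx : x ∈ spectrum ℝ H) : γ * x ∈ Set.Ioc 0 (1 / 2) := by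
  have hpos : 0 < x := by
    rw [hH.1.spectrum_real_eq_range_eigenvalues] at hx
    obtain ⟨i, rfl⟩ := hx
    exact hH.eigenvalues_pos i
  have hle : x ≤ 1 / 2 / γ := hH.1.le_of_mem_spectrum (fun v => by
    rw [div_mul_eq_mul_div, le_div_iff₀ hγ0, mul_comm]; exact hγ v) hx
  exact ⟨mul_pos hγ0 hpos, by rwa [le_div_iff₀ hγ0, mul_comm] at hle⟩

theorem IsHermitian.tendsto_pow_one_sub_smul (hH : H.IsHermitian)
    (hspec : ∀ x ∈ spectrum ℝ H, γ * x ∈ Set.Ioo 0 2) :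
    Tendsto (fun k => (1 - γ • H) ^ k) atTop (𝓝 0) := by
  have hpow : ∀ k, (1 - γ • H) ^ k = cfc (fun x => (1 - γ * x) ^ k) H := fun k => by
    rw [cfc_pow .., hH.cfc_const_sub_mul, one_smul]
  simp only [hpow]
  refine hH.tendsto_cfc_pow_atTop_nhds_zero fun x hx => ?_
  obtain ⟨h0, h2⟩ := hspec x hx
  rw [abs_lt]; constructor <;> linarith

theorem IsHermitian.isUnit_smul_one_sub_smul (hH : H.IsHermitian) {a b : ℝ}
    (h : ∀ x ∈ spectrum ℝ H, b * x ≠ a) : IsUnit (a • (1 : Matrix n n ℝ) - b • H) := by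
  rw [← hH.cfc_const_sub_mul, isUnit_cfc_iff ..]
  exact fun x hx => sub_ne_zero.mpr (h x hx).symm

theorem one_sub_one_sub_smul_sq_mul_eq_one (hH : IsUnit H)
    (hK : IsUnit ((2 : ℝ) • (1 : Matrix n n ℝ) - γ • H)) (hγ : γ ≠ 0) :
    (1 - (1 - γ • H) ^ 2) * (γ⁻¹ • (H⁻¹ * ((2 : ℝ) • (1 : Matrix n n ℝ) - γ • H)⁻¹)) = 1 := by
  set K := (2 : ℝ) • (1 : Matrix n n ℝ) - γ • H
  have hfac : 1 - (1 - γ • H) ^ 2 = γ • (K * H) := by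
    simp only [K, sq, Matrix.sub_mul, Matrix.mul_sub, Matrix.smul_mul, Matrix.mul_smul,
      Matrix.one_mul, Matrix.mul_one]
    module
  rw [hfac, Matrix.smul_mul, Matrix.mul_smul, smul_smul, mul_inv_cancel₀ hγ, one_smul,
    Matrix.mul_assoc, ← Matrix.mul_assoc H, mul_nonsing_inv _ ((isUnit_iff_isUnit_det H).mp hH),
    Matrix.one_mul, mul_nonsing_inv _ ((isUnit_iff_isUnit_det K).mp hK)]

end Matrix

namespace MeasureTheory

variable {Ω : Type*} [MeasurableSpace Ω] {μ : Measure Ω} {m n : Type*} [Fintype m] [Fintype n]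

lemma MemLp.integrable_apply_mul_apply {X : Ω → m → ℝ} {Y : Ω → n → ℝ} (hX : MemLp X 2 μ)
    (hY : MemLp Y 2 μ) (a : m) (b : n) : Integrable (fun ω => X ω a * Y ω b) μ :=
  (hX.eval a).integrable_mul (hY.eval b)

lemma MemLp.mulVec {X : Ω → n → ℝ} {p : ENNReal} (hX : MemLp X p μ) (A : Matrix m n ℝ) :
    MemLp (fun ω => A *ᵥ X ω) p μ :=
  (LinearMap.toContinuousLinearMap (mulVecLin A)).comp_memLp' hX

end MeasureTheory

namespace ProbabilityTheory

variable {Ω : Type*} [MeasurableSpace Ω] {μ : Measure Ω} {l m n : Type*}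

noncomputable def crossMoment (μ : Measure Ω) (X : Ω → m → ℝ) (Y : Ω → n → ℝ) : Matrix m n ℝ :=
  of fun a b => ∫ ω, X ω a * Y ω b ∂μ

@[simp]
lemma crossMoment_apply (X : Ω → m → ℝ) (Y : Ω → n → ℝ) (a : m) (b : n) :
    crossMoment μ X Y a b = ∫ ω, X ω a * Y ω b ∂μ := rfl

lemma crossMoment_transpose (X : Ω → m → ℝ) (Y : Ω → n → ℝ) :
    (crossMoment μ X Y)ᵀ = crossMoment μ Y X := by
  ext a b
  simp only [transpose_apply, crossMoment_apply, mul_comm]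

lemma crossMoment_smul_left (c : ℝ) (X : Ω → m → ℝ) (Y : Ω → n → ℝ) :
    crossMoment μ (c • X) Y = c • crossMoment μ X Y := by
  ext a b
  simp only [crossMoment_apply, Matrix.smul_apply, Pi.smul_apply, smul_eq_mul, mul_assoc]
  exact integral_const_mul c _

lemma crossMoment_const_left_eq_zero [Fintype n] (u : m → ℝ) {Y : Ω → n → ℝ}
    (hY : Integrable Y μ) (hY0 : ∫ ω, Y ω ∂μ = 0) : crossMoment μ (fun _ => u) Y = 0 := by
  ext a b
  rw [crossMoment_apply, integral_const_mul, ← eval_integral hY.eval, hY0]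
  simp

variable [Fintype m] [Fintype n]

lemma crossMoment_add_left {X X' : Ω → m → ℝ} {Y : Ω → n → ℝ} (hX : MemLp X 2 μ)
    (hX' : MemLp X' 2 μ) (hY : MemLp Y 2 μ) :
    crossMoment μ (X + X') Y = crossMoment μ X Y + crossMoment μ X' Y := by
  ext a b
  simp only [crossMoment_apply, Matrix.add_apply, Pi.add_apply, add_mul]
  exact integral_add (hX.integrable_apply_mul_apply hY a b)
    (hX'.integrable_apply_mul_apply hY a b)

lemma crossMoment_mulVec_left [Fintype l] {X : Ω → m → ℝ} {Y : Ω → n → ℝ} (A : Matrix l m ℝ)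
    (hX : MemLp X 2 μ) (hY : MemLp Y 2 μ) :
    crossMoment μ (fun ω => A *ᵥ X ω) Y = A * crossMoment μ X Y := by
  ext a b
  simp only [crossMoment_apply, mulVec, dotProduct, Finset.sum_mul, mul_apply, mul_assoc]
  rw [integral_finsetSum _ fun c _ => (hX.integrable_apply_mul_apply hY c b).const_mul _]
  simp only [integral_const_mul]

lemma crossMoment_eq_zero_of_indepFun {X : Ω → m → ℝ} {Y : Ω → n → ℝ} (hXY : IndepFun X Y μ)
    (hX : Integrable X μ) (hY : Integrable Y μ) (hY0 : ∫ ω, Y ω ∂μ = 0) :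
    crossMoment μ X Y = 0 := by
  ext a b
  have hind : IndepFun (fun ω => X ω a) (fun ω => Y ω b) μ :=
    hXY.comp (measurable_pi_apply a) (measurable_pi_apply b)
  have hmul := hind.integral_mul_eq_mul_integral (hX.eval a).aestronglyMeasurable
    (hY.eval b).aestronglyMeasurable
  rw [← eval_integral hY.eval, hY0] at hmul
  simpa using hmul

lemma integral_dotProduct_mulVec {X : Ω → m → ℝ} {Y : Ω → n → ℝ} (hX : MemLp X 2 μ)
    (hY : MemLp Y 2 μ) (M : Matrix m n ℝ) :
    ∫ ω, X ω ⬝ᵥ M *ᵥ Y ω ∂μ = trace (M * crossMoment μ Y X) := by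
  have hpt : ∀ ω, X ω ⬝ᵥ M *ᵥ Y ω = ∑ a, ∑ b, M a b * (Y ω b * X ω a) := fun ω => by
    simp only [dotProduct, mulVec, Finset.mul_sum]
    exact Finset.sum_congr rfl fun a _ => Finset.sum_congr rfl fun b _ => by ring
  simp only [hpt, trace, diag_apply, mul_apply, crossMoment_apply]
  rw [integral_finsetSum _ fun a _ => integrable_finsetSum _ fun b _ =>
    (hY.integrable_apply_mul_apply hX b a).const_mul (M a b)]
  refine Finset.sum_congr rfl fun a _ => ?_
  rw [integral_finsetSum _ fun b _ => (hY.integrable_apply_mul_apply hX b a).const_mul (M a b)]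
  simp only [integral_const_mul]

lemma crossMoment_mulVec_add_smul_left {X Y : Ω → n → ℝ} {W : Ω → m → ℝ} (A : Matrix n n ℝ)
    (c : ℝ) (hX : MemLp X 2 μ) (hY : MemLp Y 2 μ) (hW : MemLp W 2 μ) :
    crossMoment μ (fun ω => A *ᵥ X ω + c • Y ω) W
      = A * crossMoment μ X W + c • crossMoment μ Y W := by
  rw [show (fun ω => A *ᵥ X ω + c • Y ω) = (fun ω => A *ᵥ X ω) + c • Y from rfl,
    crossMoment_add_left (hX.mulVec A) (hY.const_smul c) hW, crossMoment_mulVec_left A hX hW,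
    crossMoment_smul_left]

lemma crossMoment_mulVec_add_smul_self {X Y : Ω → n → ℝ} (A : Matrix n n ℝ) (c : ℝ)
    (hX : MemLp X 2 μ) (hY : MemLp Y 2 μ) (hXY : crossMoment μ X Y = 0) :
    crossMoment μ (fun ω => A *ᵥ X ω + c • Y ω) (fun ω => A *ᵥ X ω + c • Y ω)
      = A * crossMoment μ X X * Aᵀ + c ^ 2 • crossMoment μ Y Y := by
  have hZ : MemLp (fun ω => A *ᵥ X ω + c • Y ω) 2 μ := (hX.mulVec A).add (hY.const_smul c)
  have hXZ : crossMoment μ X (fun ω => A *ᵥ X ω + c • Y ω) = crossMoment μ X X * Aᵀ := by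
    rw [← crossMoment_transpose, crossMoment_mulVec_add_smul_left A c hX hY hX, transpose_add,
      transpose_mul, transpose_smul, crossMoment_transpose, crossMoment_transpose, hXY, smul_zero,
      add_zero]
  have hYZ : crossMoment μ Y (fun ω => A *ᵥ X ω + c • Y ω) = c • crossMoment μ Y Y := by
    rw [← crossMoment_transpose, crossMoment_mulVec_add_smul_left A c hX hY hY, hXY,
      Matrix.mul_zero, zero_add, transpose_smul, crossMoment_transpose]
  rw [crossMoment_mulVec_add_smul_left A c hX hY hZ, hXZ, hYZ, smul_smul, sq, Matrix.mul_assoc]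

section Recursion

variable {ξ η : ℕ → Ω → n → ℝ} {A : Matrix n n ℝ} {c : ℝ}

theorem memLp_of_recursion (hξ : ∀ i, MemLp (ξ i) 2 μ) (h0 : MemLp (η 0) 2 μ)
    (hrec : ∀ k ω, η (k + 1) ω = A *ᵥ η k ω + c • ξ (k + 1) ω) (k : ℕ) : MemLp (η k) 2 μ := by
  induction k with
  | zero => exact h0
  | succ k ih =>
    rw [funext (hrec k)]
    exact (ih.mulVec A).add ((hξ _).const_smul c)

theorem crossMoment_noise_eq_zero_of_recursion (hξ : ∀ i, MemLp (ξ i) 2 μ) (h0 : MemLp (η 0) 2 μ)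
    (hrec : ∀ k ω, η (k + 1) ω = A *ᵥ η k ω + c • ξ (k + 1) ω)
    (hξξ : ∀ i j, i ≠ j → crossMoment μ (ξ i) (ξ j) = 0)
    (h0ξ : ∀ j, crossMoment μ (η 0) (ξ j) = 0) {k j : ℕ} (hkj : k < j) :
    crossMoment μ (η k) (ξ j) = 0 := by
  induction k with
  | zero => exact h0ξ j
  | succ k ih =>
    rw [funext (hrec k), crossMoment_mulVec_add_smul_left A c (memLp_of_recursion hξ h0 hrec k)
      (hξ _) (hξ j), ih (by omega), hξξ _ _ (by omega), Matrix.mul_zero, smul_zero, add_zero]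

theorem crossMoment_self_of_recursion (hξ : ∀ i, MemLp (ξ i) 2 μ) (h0 : MemLp (η 0) 2 μ)
    (hrec : ∀ k ω, η (k + 1) ω = A *ᵥ η k ω + c • ξ (k + 1) ω)
    (hξξ : ∀ i j, i ≠ j → crossMoment μ (ξ i) (ξ j) = 0)
    (h0ξ : ∀ j, crossMoment μ (η 0) (ξ j) = 0) [DecidableEq n] {C : Matrix n n ℝ}
    (hC : ∀ i, crossMoment μ (ξ i) (ξ i) = C) (k : ℕ) :
    crossMoment μ (η k) (η k) = A ^ k * crossMoment μ (η 0) (η 0) * Aᵀ ^ k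
      + ∑ j ∈ range k, A ^ j * (c ^ 2 • C) * Aᵀ ^ j := by
  refine eq_pow_mul_mul_pow_add_sum (x := fun k => crossMoment μ (η k) (η k)) (fun k => ?_) k
  rw [funext (hrec k), crossMoment_mulVec_add_smul_self A c (memLp_of_recursion hξ h0 hrec k)
    (hξ _) (crossMoment_noise_eq_zero_of_recursion hξ h0 hrec hξξ h0ξ k.lt_succ_self), hC]

theorem integral_dotProduct_mulVec_of_recursion (hξ : ∀ i, MemLp (ξ i) 2 μ)
    (h0 : MemLp (η 0) 2 μ) (hrec : ∀ k ω, η (k + 1) ω = A *ᵥ η k ω + c • ξ (k + 1) ω)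
    (hξξ : ∀ i j, i ≠ j → crossMoment μ (ξ i) (ξ j) = 0)
    (h0ξ : ∀ j, crossMoment μ (η 0) (ξ j) = 0) [DecidableEq n] {C : Matrix n n ℝ}
    (hC : ∀ i, crossMoment μ (ξ i) (ξ i) = C) (M : Matrix n n ℝ) (k : ℕ) :
    ∫ ω, η k ω ⬝ᵥ M *ᵥ η k ω ∂μ = trace (M * (A ^ k * crossMoment μ (η 0) (η 0) * Aᵀ ^ k
      + ∑ j ∈ range k, A ^ j * (c ^ 2 • C) * Aᵀ ^ j)) := by
  have hk := memLp_of_recursion hξ h0 hrec k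
  rw [integral_dotProduct_mulVec hk hk M, crossMoment_self_of_recursion hξ h0 hrec hξξ h0ξ hC]

end Recursion

end ProbabilityTheory

theorem commute_one_sub_smul_aeval {R A : Type*} [CommRing R] [Ring A] [Algebra R A] (a : A)
    (r : R) (P : R[X]) : Commute (1 - r • a) (aeval a P) := by
  have h : 1 - r • a = aeval a (1 - Polynomial.C r * X) := by
    simp [Algebra.smul_def]
  rw [h]
  exact (Commute.all _ _).map (aeval a)

theorem stmt6_general {d : ℕ} {Ω : Type*} [MeasureSpace Ω]
    [IsProbabilityMeasure (volume : Measure Ω)]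
    (H C : Matrix (Fin d) (Fin d) ℝ) (hH : H.PosDef)
    (γ : ℝ) (hγpos : 0 < γ)
    -- `γ ≤ 1/(2L)` with `L = ‖H‖`, i.e. `γ H ≼ ½ I`
    (hγ : ∀ v : Fin d → ℝ, γ * (v ⬝ᵥ H.mulVec v) ≤ (1 / 2) * (v ⬝ᵥ v))
    (ξ : ℕ → Ω → (Fin d → ℝ)) (η : ℕ → Ω → (Fin d → ℝ)) (η0 : Fin d → ℝ)
    (hmeas : ∀ i, Measurable (ξ i))
    -- i.i.d. noise
    (hindep : iIndepFun ξ volume)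
    -- zero mean, covariance `C`, square integrable
    (hmean : ∀ i, ∫ ω, ξ i ω = 0)
    (hcov : ∀ i a b, ∫ ω, ξ i ω a * ξ i ω b = C a b)
    (hL2 : ∀ i, Integrable (fun ω => ‖ξ i ω‖ ^ 2))
    -- deterministic initialization and SGD recursion
    (hη0 : ∀ ω, η 0 ω = η0)
    (hrec : ∀ k ω, η (k + 1) ω = (1 - γ • H).mulVec (η k ω) + γ • ξ (k + 1) ω)
    (P : Polynomial ℝ) :
    Filter.Tendsto (fun n => ∫ ω, (η n ω) ⬝ᵥ ((aeval H P).mulVec (η n ω)))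
      Filter.atTop
      (nhds (γ * Matrix.trace
        (C * aeval H P * H⁻¹ *
          ((2 : ℝ) • (1 : Matrix (Fin d) (Fin d) ℝ) - γ • H)⁻¹))) := by
  set A := 1 - γ • H
  have hspec : ∀ x ∈ spectrum ℝ H, γ * x ∈ Set.Ioo 0 2 := fun x hx =>
    Set.Ioc_subset_Ioo_right (by norm_num) (hH.mul_mem_Ioc_of_mem_spectrum hγpos hγ hx)
  have hξ : ∀ i, MemLp (ξ i) 2 volume := fun i =>
    (memLp_two_iff_integrable_sq_norm (hmeas i).aestronglyMeasurable).2 (hL2 i)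
  have hξ1 : ∀ i, Integrable (ξ i) := fun i => (hξ i).integrable one_le_two
  have hη0' : η 0 = fun _ => η0 := funext hη0
  have hmom := integral_dotProduct_mulVec_of_recursion hξ (hη0' ▸ memLp_const η0) hrec
    (fun i j hij =>
      crossMoment_eq_zero_of_indepFun (hindep.indepFun hij) (hξ1 i) (hξ1 j) (hmean j))
    (fun j => hη0' ▸ crossMoment_const_left_eq_zero η0 (hξ1 j) (hmean j))
    (fun i => by ext a b; exact hcov i a b) (aeval H P)
  have hAt : Aᵀ = A := by simp [A, (IsSymm.eq hH.1 : Hᵀ = H)]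
  simp only [hmom, hAt]
  have hy := one_sub_one_sub_smul_sq_mul_eq_one hH.isUnit
    (hH.1.isUnit_smul_one_sub_smul fun x hx => (hspec x hx).2.ne) hγpos.ne'
  convert tendsto_trace_mul_pow_add_sum (commute_one_sub_smul_aeval H γ P)
    (hH.1.tendsto_pow_one_sub_smul hspec) hy _ _ using 2
  simp only [Matrix.mul_smul, Matrix.smul_mul, trace_smul, smul_eq_mul, Matrix.mul_assoc]
  rw [trace_mul_comm C]
  simp only [Matrix.mul_assoc]
  field_simp

/-- **Stationary value of the quadratic form (Lemma, second part).**
In the quadratic semi-stochastic setting with step `γ ≤ 1/(2‖H‖)`, letting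
`n → ∞` in the closed-form second moment formula,
`E_{π_γ}⟨η, P(H)η⟩ = γ tr(C P(H) H⁻¹ (2I − γH)⁻¹)` for any polynomial `P`. -/
theorem stmt6 {d : ℕ} {Ω : Type*} [MeasureSpace Ω]
    [IsProbabilityMeasure (volume : Measure Ω)]
    (H C : Matrix (Fin d) (Fin d) ℝ) (hH : H.PosDef)
    (γ : ℝ) (hγpos : 0 < γ)
    -- `γ ≤ 1/(2L)` with `L = ‖H‖`, i.e. `γ H ≼ ½ I`
    (hγ : ∀ v : Fin d → ℝ, γ * (v ⬝ᵥ H.mulVec v) ≤ (1 / 2) * (v ⬝ᵥ v))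
    (ξ : ℕ → Ω → (Fin d → ℝ)) (η : ℕ → Ω → (Fin d → ℝ)) (η0 : Fin d → ℝ)
    (hmeas : ∀ i, Measurable (ξ i))
    -- i.i.d. noise
    (hindep : iIndepFun ξ volume)
    (hident : ∀ i j, Measure.map (ξ i) volume = Measure.map (ξ j) volume)
    -- zero mean, covariance `C`, square integrable
    (hmean : ∀ i, ∫ ω, ξ i ω = 0)
    (hcov : ∀ i a b, ∫ ω, ξ i ω a * ξ i ω b = C a b)
    (hL2 : ∀ i, Integrable (fun ω => ‖ξ i ω‖ ^ 2))
    -- deterministic initialization and SGD recursion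
    (hη0 : ∀ ω, η 0 ω = η0)
    (hrec : ∀ k ω, η (k + 1) ω = (1 - γ • H).mulVec (η k ω) + γ • ξ (k + 1) ω)
    (P : Polynomial ℝ) :
    Filter.Tendsto (fun n => ∫ ω, (η n ω) ⬝ᵥ ((aeval H P).mulVec (η n ω)))
      Filter.atTop
      (nhds (γ * Matrix.trace
        (C * aeval H P * H⁻¹ *
          ((2 : ℝ) • (1 : Matrix (Fin d) (Fin d) ℝ) - γ • H)⁻¹))) :=
  stmt6_general H C hH γ hγpos hγ ξ η η0 hmeas hindep hmean hcov hL2 hη0 hrec P
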